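/- The function x ↦ x² · coth²(x/4) is strictly increasing on the interval (0, ∞), where coth t = cosh t / sinh t. -/

import Mathlib

/-! The function is `(4 · g(x/4))²` with `g t = t · cosh t / sinh t`, so it suffices that `g` is
positive and strictly increasing on `(0, ∞)`. Its derivative is `(sinh t cosh t - t) / sinh² t`,
and `sinh t cosh t = sinh (2t) / 2 > t` for `t > 0`. -/

open Real Set

namespace Real

theorem self_lt_sinh_mul_cosh {t : ℝ} (ht : 0 < t) : t < sinh t * cosh t := by
  have h : 2 * t < sinh (2 * t) := self_lt_sinh_iff.2 (by positivity)
  rw [sinh_two_mul] at h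
  linarith

theorem hasDerivAt_mul_cosh_div_sinh {t : ℝ} (ht : sinh t ≠ 0) :
    HasDerivAt (fun t => t * (cosh t / sinh t)) ((sinh t * cosh t - t) / sinh t ^ 2) t := by
  refine ((hasDerivAt_id' t).mul ((hasDerivAt_cosh t).div (hasDerivAt_sinh t) ht)).congr_deriv ?_
  simp only [Pi.div_apply]
  field_simp
  linear_combination -t * cosh_sq_sub_sinh_sq t

theorem strictMonoOn_mul_cosh_div_sinh :
    StrictMonoOn (fun t => t * (cosh t / sinh t)) (Ioi 0) := by
  have hsinh : ∀ t ∈ Ioi (0 : ℝ), sinh t ≠ 0 := fun t ht => (sinh_pos_iff.2 ht).ne'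
  refine strictMonoOn_of_deriv_pos (convex_Ioi 0) ?_ ?_
  · exact fun t ht => (hasDerivAt_mul_cosh_div_sinh (hsinh t ht)).continuousAt.continuousWithinAt
  · intro t ht
    rw [interior_Ioi, mem_Ioi] at ht
    rw [(hasDerivAt_mul_cosh_div_sinh (hsinh t ht)).deriv]
    have := self_lt_sinh_mul_cosh ht
    exact div_pos (by linarith) (by positivity)

end Real

theorem strictMonoOn_sq_mul_coth_sq :
    StrictMonoOn (fun x : ℝ => x ^ 2 * (Real.cosh (x / 4) / Real.sinh (x / 4)) ^ 2)
      (Set.Ioi (0 : ℝ)) := by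
  intro a (ha : 0 < a) b (hb : 0 < b) hab
  have hrescale : ∀ x : ℝ, x ^ 2 * (cosh (x / 4) / sinh (x / 4)) ^ 2
      = 16 * (x / 4 * (cosh (x / 4) / sinh (x / 4))) ^ 2 := fun x => by ring
  simp only [hrescale]
  have hlt := strictMonoOn_mul_cosh_div_sinh (div_pos ha four_pos) (div_pos hb four_pos)
    (div_lt_div_of_pos_right hab four_pos)
  have hpos : 0 < a / 4 * (cosh (a / 4) / sinh (a / 4)) := by positivity
  gcongr
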